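/- arXiv:1710.02749 — 3 statements merged into one kernel-verified Lean document; each statement's English description precedes it below -/
import Mathlib

section
/- Let U ⊂ ℝ^n be open, Φ₀ : cl(U) → ℝ^n continuously differentiable, p₀ ∈ U, and suppose DΦ₀(p₀) is invertible. Then there exist a neighborhood W of Φ₀(p₀), a neighborhood 𝒰 of Φ₀ in C¹(cl(U)), and a constant C > 0 such that for every Φ ∈ 𝒰, the local inverses exist on cl(W) and ‖Φ⁻¹ - Φ₀⁻¹‖_{C⁰(cl(W))} ≤ C ‖Φ - Φ₀‖_{C¹(cl(U))}. -/
/-!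
Let `A = DΦ₀(p₀)` and let `B` be a closed ball around `p₀` on which `DΦ₀` stays close to `A`.
By the mean value inequality, every `Φ` that is `C¹`-close to `Φ₀` approximates `A` on `B` up
to a constant `c < ‖A⁻¹‖⁻¹`. Such a `Φ` is therefore anti-Lipschitz on `B`, with a constant `K`
independent of `Φ`, and by the contraction argument behind the inverse function theorem it maps
`B` onto a ball around `Φ p₀` of radius proportional to that of `B`; for `Φ` close enough to
`Φ₀` this ball contains a fixed neighbourhood `cl W` of `Φ₀ p₀`, on which `Φ` thus has a
Lipschitz inverse. If `Φ (Ψ q) = q = Φ₀ (Ψ₀ q)`, the anti-Lipschitz bound for `Φ₀` gives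
`‖Ψ q - Ψ₀ q‖ ≤ K ‖Φ₀ (Ψ q) - Φ₀ (Ψ₀ q)‖ = K ‖Φ₀ (Ψ q) - Φ (Ψ q)‖ ≤ K ‖Φ - Φ₀‖_{C⁰}`.
-/
open Set Metric
open scoped NNReal

section Metric

variable {α β : Type*} [PseudoMetricSpace α] [PseudoMetricSpace β] {K : ℝ≥0} {s : Set α}

theorem AntilipschitzWith.exists_lipschitzOnWith_rightInvOn [Nonempty α] {f : α → β} {t : Set β}
    (hf : AntilipschitzWith K (s.domRestrict f)) (hst : SurjOn f s t) :
    ∃ g : β → α, LipschitzOnWith K g t ∧ ∀ q ∈ t, g q ∈ s ∧ f (g q) = q :=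
  ⟨Function.invFunOn f s,
    lipschitzOnWith_iff_restrict.2 (hf.to_rightInvOn' hst.mapsTo_invFunOn hst.rightInvOn_invFunOn),
    fun _ hq => ⟨hst.mapsTo_invFunOn hq, hst.rightInvOn_invFunOn hq⟩⟩

theorem AntilipschitzWith.dist_le_mul_of_apply_eq {f f₀ : α → β} {ε : ℝ}
    (hf₀ : AntilipschitzWith K (s.domRestrict f₀)) (hε : ∀ x ∈ s, dist (f x) (f₀ x) ≤ ε)
    {x x₀ : α} (hx : x ∈ s) (hx₀ : x₀ ∈ s) (h : f x = f₀ x₀) : dist x x₀ ≤ K * ε :=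
  calc dist x x₀ ≤ K * dist (f₀ x) (f₀ x₀) :=
        antilipschitzWith_iff_le_mul_dist.1 hf₀ ⟨x, hx⟩ ⟨x₀, hx₀⟩
    _ = K * dist (f x) (f₀ x) := by rw [← h, dist_comm]
    _ ≤ K * ε := by gcongr; exact hε x hx

end Metric

section Normed

variable {𝕜 E F : Type*} [NontriviallyNormedField 𝕜] [NormedAddCommGroup E] [NormedSpace 𝕜 E]
  [NormedAddCommGroup F] [NormedSpace 𝕜 F]

theorem ContDiffOn.exists_closedBall_norm_fderiv_sub_le {f : E → F} {U : Set E}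
    (hf : ContDiffOn 𝕜 1 f U) (hU : IsOpen U) {p : E} (hp : p ∈ U) {ε : ℝ} (hε : 0 < ε) :
    ∃ r > 0, closedBall p r ⊆ U ∧ ∀ x ∈ closedBall p r, ‖fderiv 𝕜 f x - fderiv 𝕜 f p‖ ≤ ε := by
  have hcont : ContinuousAt (fderiv 𝕜 f) p :=
    (hf.continuousOn_fderiv_of_isOpen hU le_rfl).continuousAt (hU.mem_nhds hp)
  have hnear : ∀ᶠ x in nhds p, x ∈ U ∧ fderiv 𝕜 f x ∈ closedBall (fderiv 𝕜 f p) ε :=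
    Filter.Eventually.and (hU.mem_nhds hp) (hcont.eventually (closedBall_mem_nhds _ hε))
  obtain ⟨r, hr, hrU⟩ := nhds_basis_closedBall.mem_iff.1 hnear
  exact ⟨r, hr, fun x hx => (hrU hx).1, fun x hx => mem_closedBall_iff_norm.1 (hrU hx).2⟩

namespace ApproximatesLinearOn

variable {f : E → F} {A : E ≃L[𝕜] F} {s : Set E} {c M : ℝ≥0}

theorem antilipschitz_of_nnnorm_symm_le (hf : ApproximatesLinearOn f (A : E →L[𝕜] F) s c)
    (hM : ‖(A.symm : F →L[𝕜] E)‖₊ ≤ M) (hc : c < M⁻¹) :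
    AntilipschitzWith (M⁻¹ - c)⁻¹ (s.domRestrict f) := by
  have hA : AntilipschitzWith M A := (A : E →L[𝕜] F).antilipschitz_of_bound fun x =>
    calc ‖x‖ = ‖(A.symm : F →L[𝕜] E) (A x)‖ := by simp
      _ ≤ ‖(A.symm : F →L[𝕜] E)‖ * ‖A x‖ := ContinuousLinearMap.le_opNorm _ _
      _ ≤ M * ‖A x‖ := by gcongr; exact hM
  convert! (hA.domRestrict s).add_lipschitzWith hf.lipschitz_sub hc
  simp [Set.domRestrict]

theorem surjOn_closedBall_of_nnnorm_symm_le [CompleteSpace E]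
    (hf : ApproximatesLinearOn f (A : E →L[𝕜] F) s c) (hM : ‖(A.symm : F →L[𝕜] E)‖₊ ≤ M)
    {b : E} {r : ℝ} (hr : 0 ≤ r) (hrs : closedBall b r ⊆ s) :
    SurjOn f (closedBall b r) (closedBall (f b) (((M : ℝ)⁻¹ - c) * r)) :=
  hf.surjOn_closedBall_of_nonlinearRightInverse
    { toFun := A.symm
      nnnorm := M
      bound' := fun y => ((A.symm : F →L[𝕜] E).le_opNorm y).trans (by gcongr; exact hM)
      right_inv' := A.apply_symm_apply } hr hrs

theorem exists_continuousOn_rightInvOn [CompleteSpace E] {b : E} {r : ℝ}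
    (hf : ApproximatesLinearOn f (A : E →L[𝕜] F) (closedBall b r) c)
    (hM : ‖(A.symm : F →L[𝕜] E)‖₊ ≤ M) (hc : c < M⁻¹) (hr : 0 ≤ r) {t : Set F}
    (ht : t ⊆ closedBall (f b) (((M : ℝ)⁻¹ - c) * r)) :
    ∃ g : F → E, ContinuousOn g t ∧ ∀ q ∈ t, g q ∈ closedBall b r ∧ f (g q) = q := by
  have hsurj := (hf.surjOn_closedBall_of_nnnorm_symm_le hM hr subset_rfl).mono subset_rfl ht
  obtain ⟨g, hg, hgf⟩ :=
    (hf.antilipschitz_of_nnnorm_symm_le hM hc).exists_lipschitzOnWith_rightInvOn hsurj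
  exact ⟨g, hg.continuousOn, hgf⟩

end ApproximatesLinearOn

end Normed

section Real

variable {E F : Type*} [NormedAddCommGroup E] [NormedSpace ℝ E]
  [NormedAddCommGroup F] [NormedSpace ℝ F]

theorem ContDiffOn.approximatesLinearOn_of_norm_fderiv_sub_le {f : E → F} {U s : Set E}
    (hf : ContDiffOn ℝ 1 f U) (hU : IsOpen U) (hs : Convex ℝ s) (hsU : s ⊆ U)
    {A : E →L[ℝ] F} {c : ℝ≥0} (hc : ∀ x ∈ s, ‖fderiv ℝ f x - A‖ ≤ c) :
    ApproximatesLinearOn f A s c := by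
  have hdiff (x : E) (hx : x ∈ s) : HasFDerivAt f (fderiv ℝ f x) x :=
    ((hf.differentiableOn one_ne_zero).differentiableAt (hU.mem_nhds (hsU hx))).hasFDerivAt
  exact LipschitzOnWith.approximatesLinearOn <| hs.lipschitzOnWith_of_nnnorm_hasFDerivWithin_le
    (fun x hx => ((hdiff x hx).sub A.hasFDerivAt).hasFDerivWithinAt) hc

theorem ContDiffOn.approximatesLinearOn_of_norm_fderiv_sub_fderiv_le {f f₀ : E → F} {U s : Set E}
    (hf : ContDiffOn ℝ 1 f U) (hU : IsOpen U) (hs : Convex ℝ s) (hsU : s ⊆ U)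
    {A : E →L[ℝ] F} {c : ℝ≥0} {c₀ ε : ℝ} (hf₀ : ∀ x ∈ s, ‖fderiv ℝ f₀ x - A‖ ≤ c₀)
    (hff₀ : ∀ x ∈ s, ‖fderiv ℝ f x - fderiv ℝ f₀ x‖ ≤ ε) (hc : c₀ + ε ≤ c) :
    ApproximatesLinearOn f A s c :=
  hf.approximatesLinearOn_of_norm_fderiv_sub_le hU hs hsU fun x hx =>
    calc ‖fderiv ℝ f x - A‖ ≤ ‖fderiv ℝ f x - fderiv ℝ f₀ x‖ + ‖fderiv ℝ f₀ x - A‖ :=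
          norm_sub_le_norm_sub_add_norm_sub _ _ _
      _ ≤ c := by linarith [hff₀ x hx, hf₀ x hx]

end Real

/-- Stability of local inverses under `C¹` perturbation (implicit function theorem
consequence).  If `Φ₀` is `C¹` on `cl U` with invertible derivative at `p₀ ∈ U`, then
there are a neighbourhood `W` of `Φ₀ p₀`, a constant `C > 0` and a `C¹`-neighbourhood
of `Φ₀` (radius `δ`) such that every `Φ` in that neighbourhood has a local inverse `Ψ`
on `cl W` with values in `U`, and any two such local inverses satisfy
`‖Ψ - Ψ₀‖_{C⁰(cl W)} ≤ C ‖Φ - Φ₀‖_{C¹(cl U)}`. -/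
theorem local_inverse_stability {n : ℕ}
    (U : Set (EuclideanSpace ℝ (Fin n)))
    (hU : IsOpen U)
    (Φ₀ : EuclideanSpace ℝ (Fin n) → EuclideanSpace ℝ (Fin n))
    (hΦ₀ : ContDiffOn ℝ 1 Φ₀ (closure U))
    (p₀ : EuclideanSpace ℝ (Fin n)) (hp₀ : p₀ ∈ U)
    (hD : ∃ D : (EuclideanSpace ℝ (Fin n)) ≃L[ℝ] (EuclideanSpace ℝ (Fin n)),
      (D : EuclideanSpace ℝ (Fin n) →L[ℝ] EuclideanSpace ℝ (Fin n)) = fderiv ℝ Φ₀ p₀) :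
    ∃ W ∈ nhds (Φ₀ p₀), ∃ V ∈ nhds p₀, V ⊆ U ∧ ∃ C > (0:ℝ), ∃ δ > (0:ℝ),
      -- `Φ₀` itself has a local inverse `Ψ₀` on `cl W` with values in `U`
      (∃ Ψ₀ : EuclideanSpace ℝ (Fin n) → EuclideanSpace ℝ (Fin n),
        ContinuousOn Ψ₀ (closure W) ∧ (∀ q ∈ closure W, Ψ₀ q ∈ V ∧ Φ₀ (Ψ₀ q) = q)) ∧
      -- every `C¹`-close `Φ` has a local inverse, and the inverses are stably close
      (∀ Φ : EuclideanSpace ℝ (Fin n) → EuclideanSpace ℝ (Fin n),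
        ContDiffOn ℝ 1 Φ (closure U) →
        ∀ ε : ℝ, 0 ≤ ε → ε ≤ δ →
        (∀ x ∈ closure U, ‖Φ x - Φ₀ x‖ + ‖fderiv ℝ Φ x - fderiv ℝ Φ₀ x‖ ≤ ε) →
        (∃ Ψ : EuclideanSpace ℝ (Fin n) → EuclideanSpace ℝ (Fin n),
          ContinuousOn Ψ (closure W) ∧ (∀ q ∈ closure W, Ψ q ∈ V ∧ Φ (Ψ q) = q)) ∧
        (∀ Ψ Ψ₀ : EuclideanSpace ℝ (Fin n) → EuclideanSpace ℝ (Fin n),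
          (∀ q ∈ closure W, Ψ q ∈ V ∧ Φ (Ψ q) = q) →
          (∀ q ∈ closure W, Ψ₀ q ∈ V ∧ Φ₀ (Ψ₀ q) = q) →
          ∀ q ∈ closure W, ‖Ψ q - Ψ₀ q‖ ≤ C * ε)) := by
  obtain ⟨A, hA⟩ := hD
  -- `‖A⁻¹‖` vanishes when `n = 0`, so the constants are built from the positive bound `M`.
  set M : ℝ≥0 := ‖(A.symm : EuclideanSpace ℝ (Fin n) →L[ℝ] EuclideanSpace ℝ (Fin n))‖₊ + 1
  set c : ℝ≥0 := M⁻¹ / 2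
  have hM : ‖(A.symm : EuclideanSpace ℝ (Fin n) →L[ℝ] EuclideanSpace ℝ (Fin n))‖₊ ≤ M :=
    le_self_add
  have hcM : c < M⁻¹ := NNReal.half_lt_self (by positivity)
  have hMc : (M : ℝ)⁻¹ - c = c := by simp only [c, NNReal.coe_div]; push_cast; ring
  have hc : (0 : ℝ) < c := by positivity
  obtain ⟨r, hr, hrU, hΦ₀A⟩ :=
    (hΦ₀.mono subset_closure).exists_closedBall_norm_fderiv_sub_le hU hp₀ (half_pos hc)
  rw [← hA] at hΦ₀A
  have hΦ₀c := (hΦ₀.mono subset_closure).approximatesLinearOn_of_norm_fderiv_sub_le hU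
    (convex_closedBall _ _) hrU fun x hx => (hΦ₀A x hx).trans (half_le_self hc.le)
  refine ⟨ball (Φ₀ p₀) (c * r / 2), ball_mem_nhds _ (by positivity), closedBall p₀ r,
    closedBall_mem_nhds _ hr, hrU, ((M⁻¹ - c)⁻¹ : ℝ≥0),
    NNReal.coe_pos.2 (inv_pos.2 (tsub_pos_of_lt hcM)), min (c / 2) (c * r / 2), by positivity,
    hΦ₀c.exists_continuousOn_rightInvOn hM hcM hr.le ?_, ?_⟩
  · exact closure_ball_subset_closedBall.trans
      (closedBall_subset_closedBall (by rw [hMc]; linarith [mul_pos hc hr]))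
  intro Φ hΦ ε _ hεδ hΦε
  have hΦΦ₀ (x) (hx : x ∈ closure U) : ‖Φ x - Φ₀ x‖ ≤ ε :=
    (le_add_of_nonneg_right (norm_nonneg _)).trans (hΦε x hx)
  have hDΦDΦ₀ (x) (hx : x ∈ closure U) : ‖fderiv ℝ Φ x - fderiv ℝ Φ₀ x‖ ≤ ε :=
    (le_add_of_nonneg_left (norm_nonneg _)).trans (hΦε x hx)
  have hεc : ε ≤ c / 2 := hεδ.trans (min_le_left _ _)
  have hεr : dist (Φ₀ p₀) (Φ p₀) ≤ c * r / 2 := by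
    rw [dist_comm, dist_eq_norm]
    exact (hΦΦ₀ p₀ (subset_closure hp₀)).trans (hεδ.trans (min_le_right _ _))
  have hΦc := (hΦ.mono subset_closure).approximatesLinearOn_of_norm_fderiv_sub_fderiv_le
    (c := c) hU (convex_closedBall _ _) hrU hΦ₀A
    (fun x hx => hDΦDΦ₀ x (subset_closure (hrU hx))) (by linarith)
  refine ⟨hΦc.exists_continuousOn_rightInvOn hM hcM hr.le ?_, fun Ψ Ψ₀ hΨ hΨ₀ q hq => ?_⟩
  · exact closure_ball_subset_closedBall.trans
      (closedBall_subset_closedBall' (by rw [hMc]; linarith))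
  · rw [← dist_eq_norm]
    exact (hΦ₀c.antilipschitz_of_nnnorm_symm_le hM hcM).dist_le_mul_of_apply_eq
      (fun x hx => (dist_eq_norm _ _).trans_le (hΦΦ₀ x (subset_closure (hrU hx))))
      (hΨ q hq).1 (hΨ₀ q hq).1 (by rw [(hΨ q hq).2, (hΨ₀ q hq).2])
end

section
/- Let H₁, H₂ be Hilbert spaces and let A, Ã : H₁ → H₂ be bounded linear operators with closed range whose Moore–Penrose pseudoinverses A†, Ã† are bounded. Then ‖Ã† - A†‖ ≤ 3 max(‖Ã†‖, ‖A†‖)² ‖Ã - A‖. -/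
/-!
Write `E = B - A` and `X*` for the adjoint. The Moore–Penrose equations give the exact identity
`B† - A† = -B† E A† + B† (B†)* E* (1 - A A†) + (1 - B† B) E* (A†)* A†`.
Since `1 - A A†` and `1 - B† B` are orthogonal projections they have norm at most one, and
`‖E*‖ = ‖E‖`, so each of the three terms is bounded by `max(‖B†‖, ‖A†‖)² ‖E‖`.
-/

open ContinuousLinearMap

open scoped InnerProduct

theorem ContinuousLinearMap.opNorm_comp_le_of_le {𝕜 E F G : Type*} [NontriviallyNormedField 𝕜]
    [SeminormedAddCommGroup E] [NormedSpace 𝕜 E] [SeminormedAddCommGroup F] [NormedSpace 𝕜 F]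
    [SeminormedAddCommGroup G] [NormedSpace 𝕜 G] {f : F →L[𝕜] G} {g : E →L[𝕜] F} {a b : ℝ}
    (hf : ‖f‖ ≤ a) (hg : ‖g‖ ≤ b) : ‖f ∘L g‖ ≤ a * b :=
  (opNorm_comp_le f g).trans (mul_le_mul hf hg (norm_nonneg g) ((norm_nonneg f).trans hf))

section

variable {𝕜 E F : Type*} [RCLike 𝕜]
  [NormedAddCommGroup E] [InnerProductSpace 𝕜 E] [CompleteSpace E]
  [NormedAddCommGroup F] [InnerProductSpace 𝕜 F] [CompleteSpace F]

structure IsMoorePenroseInverse (A : E →L[𝕜] F) (A' : F →L[𝕜] E) : Prop where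
  self_comp_inv_comp_self : A ∘L A' ∘L A = A
  inv_comp_self_comp_inv : A' ∘L A ∘L A' = A'
  adjoint_self_comp_inv : (A ∘L A')† = A ∘L A'
  adjoint_inv_comp_self : (A' ∘L A)† = A' ∘L A

namespace IsMoorePenroseInverse

variable {A : E →L[𝕜] F} {A' : F →L[𝕜] E}

theorem isStarProjection_self_comp_inv (h : IsMoorePenroseInverse A A') :
    IsStarProjection (A ∘L A') where
  isIdempotentElem := by
    change (A ∘L A') ∘L (A ∘L A') = A ∘L A'
    rw [← comp_assoc, comp_assoc A A' A, h.self_comp_inv_comp_self]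
  isSelfAdjoint := by rw [IsSelfAdjoint, star_eq_adjoint, h.adjoint_self_comp_inv]

theorem isStarProjection_inv_comp_self (h : IsMoorePenroseInverse A A') :
    IsStarProjection (A' ∘L A) where
  isIdempotentElem := by
    change (A' ∘L A) ∘L (A' ∘L A) = A' ∘L A
    rw [← comp_assoc, comp_assoc A' A A', h.inv_comp_self_comp_inv]
  isSelfAdjoint := by rw [IsSelfAdjoint, star_eq_adjoint, h.adjoint_inv_comp_self]

theorem norm_one_sub_self_comp_inv_le (h : IsMoorePenroseInverse A A') :
    ‖1 - A ∘L A'‖ ≤ 1 :=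
  h.isStarProjection_self_comp_inv.one_sub.norm_le

theorem norm_one_sub_inv_comp_self_le (h : IsMoorePenroseInverse A A') :
    ‖1 - A' ∘L A‖ ≤ 1 :=
  h.isStarProjection_inv_comp_self.one_sub.norm_le

theorem adjoint_comp_self_comp_inv (h : IsMoorePenroseInverse A A') :
    A† ∘L A ∘L A' = A† := by
  rw [← h.adjoint_self_comp_inv, ← adjoint_comp, comp_assoc, h.self_comp_inv_comp_self]

theorem inv_comp_self_comp_adjoint (h : IsMoorePenroseInverse A A') :
    A' ∘L A ∘L A† = A† := by
  rw [← comp_assoc, ← h.adjoint_inv_comp_self, ← adjoint_comp, h.self_comp_inv_comp_self]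

theorem adjoint_comp_adjoint_inv_comp_inv (h : IsMoorePenroseInverse A A') :
    A† ∘L A'† ∘L A' = A' := by
  rw [← comp_assoc, ← adjoint_comp, h.adjoint_inv_comp_self, comp_assoc,
    h.inv_comp_self_comp_inv]

theorem inv_comp_adjoint_inv_comp_adjoint (h : IsMoorePenroseInverse A A') :
    A' ∘L A'† ∘L A† = A' := by
  rw [← adjoint_comp, h.adjoint_self_comp_inv, h.inv_comp_self_comp_inv]

variable {B : E →L[𝕜] F} {B' : F →L[𝕜] E}

theorem inv_sub_inv_eq (hA : IsMoorePenroseInverse A A') (hB : IsMoorePenroseInverse B B') :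
    B' - A' = -(B' ∘L (B - A) ∘L A') + B' ∘L B'† ∘L (B - A)† ∘L (1 - A ∘L A')
      + (1 - B' ∘L B) ∘L (B - A)† ∘L A'† ∘L A' := by
  have hA₁ (y : F) : (A†) (A (A' y)) = (A†) y := congr($hA.adjoint_comp_self_comp_inv y)
  have hA₂ (y : F) : (A†) ((A'†) (A' y)) = A' y := congr($hA.adjoint_comp_adjoint_inv_comp_inv y)
  have hB₁ (y : F) : B' (B ((B†) y)) = (B†) y := congr($hB.inv_comp_self_comp_adjoint y)
  have hB₂ (y : F) : B' ((B'†) ((B†) y)) = B' y := congr($hB.inv_comp_adjoint_inv_comp_adjoint y)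
  -- pointwise, every composite is right-nested, so the four identities apply as rewrites
  ext y
  simp only [map_sub, sub_apply, comp_apply, one_apply_eq_self, neg_apply, add_apply,
    hA₁, hA₂, hB₁, hB₂]
  abel

theorem norm_inv_sub_inv_le (hA : IsMoorePenroseInverse A A') (hB : IsMoorePenroseInverse B B') :
    ‖B' - A'‖ ≤ (‖B'‖ * ‖A'‖ + ‖B'‖ ^ 2 + ‖A'‖ ^ 2) * ‖B - A‖ := by
  have h₁ : ‖B' ∘L (B - A) ∘L A'‖ ≤ ‖B'‖ * (‖B - A‖ * ‖A'‖) :=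
    opNorm_comp_le_of_le le_rfl (opNorm_comp_le _ _)
  have h₂ : ‖B' ∘L B'† ∘L (B - A)† ∘L (1 - A ∘L A')‖ ≤ ‖B'‖ * (‖B'‖ * (‖B - A‖ * 1)) :=
    opNorm_comp_le_of_le le_rfl <| opNorm_comp_le_of_le (adjoint.norm_map B').le <|
      opNorm_comp_le_of_le (adjoint.norm_map (B - A)).le hA.norm_one_sub_self_comp_inv_le
  have h₃ : ‖(1 - B' ∘L B) ∘L (B - A)† ∘L A'† ∘L A'‖ ≤ 1 * (‖B - A‖ * (‖A'‖ * ‖A'‖)) :=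
    opNorm_comp_le_of_le hB.norm_one_sub_inv_comp_self_le <|
      opNorm_comp_le_of_le (adjoint.norm_map (B - A)).le <|
        opNorm_comp_le_of_le (adjoint.norm_map A').le le_rfl
  rw [hA.inv_sub_inv_eq hB]
  calc _ ≤ ‖B' ∘L (B - A) ∘L A'‖ + ‖B' ∘L B'† ∘L (B - A)† ∘L (1 - A ∘L A')‖
          + ‖(1 - B' ∘L B) ∘L (B - A)† ∘L A'† ∘L A'‖ := by
        rw [← norm_neg (B' ∘L _)]
        exact norm_add₃_le
    _ ≤ ‖B'‖ * (‖B - A‖ * ‖A'‖) + ‖B'‖ * (‖B'‖ * (‖B - A‖ * 1))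
          + 1 * (‖B - A‖ * (‖A'‖ * ‖A'‖)) := by gcongr
    _ = (‖B'‖ * ‖A'‖ + ‖B'‖ ^ 2 + ‖A'‖ ^ 2) * ‖B - A‖ := by ring

end IsMoorePenroseInverse

end

theorem pseudoinverse_perturbation_general
    {H₁ H₂ : Type*}
    [NormedAddCommGroup H₁] [InnerProductSpace ℝ H₁] [CompleteSpace H₁]
    [NormedAddCommGroup H₂] [InnerProductSpace ℝ H₂] [CompleteSpace H₂]
    (A B : H₁ →L[ℝ] H₂) (Ad Bd : H₂ →L[ℝ] H₁)
    -- Moore–Penrose equations for `Ad = A†`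
    (h1 : A.comp (Ad.comp A) = A) (h2 : Ad.comp (A.comp Ad) = Ad)
    (h3 : ContinuousLinearMap.adjoint (A.comp Ad) = A.comp Ad)
    (h4 : ContinuousLinearMap.adjoint (Ad.comp A) = Ad.comp A)
    -- Moore–Penrose equations for `Bd = B†`
    (h1' : B.comp (Bd.comp B) = B) (h2' : Bd.comp (B.comp Bd) = Bd)
    (h3' : ContinuousLinearMap.adjoint (B.comp Bd) = B.comp Bd)
    (h4' : ContinuousLinearMap.adjoint (Bd.comp B) = Bd.comp B) :
    ‖Bd - Ad‖ ≤ 3 * max ‖Bd‖ ‖Ad‖ ^ 2 * ‖B - A‖ := by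
  have hBd : ‖Bd‖ ≤ max ‖Bd‖ ‖Ad‖ := le_max_left _ _
  have hAd : ‖Ad‖ ≤ max ‖Bd‖ ‖Ad‖ := le_max_right _ _
  calc ‖Bd - Ad‖ ≤ (‖Bd‖ * ‖Ad‖ + ‖Bd‖ ^ 2 + ‖Ad‖ ^ 2) * ‖B - A‖ :=
        IsMoorePenroseInverse.norm_inv_sub_inv_le ⟨h1, h2, h3, h4⟩ ⟨h1', h2', h3', h4'⟩
    _ ≤ (max ‖Bd‖ ‖Ad‖ * max ‖Bd‖ ‖Ad‖ + max ‖Bd‖ ‖Ad‖ ^ 2 + max ‖Bd‖ ‖Ad‖ ^ 2) * ‖B - A‖ := by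
        gcongr
    _ = 3 * max ‖Bd‖ ‖Ad‖ ^ 2 * ‖B - A‖ := by ring

/-- Izumino-type perturbation bound for Moore–Penrose pseudoinverses of bounded
operators with closed range between Hilbert spaces:
`‖B† - A†‖ ≤ 3 max(‖B†‖, ‖A†‖)² ‖B - A‖`. -/
theorem pseudoinverse_perturbation
    {H₁ H₂ : Type*}
    [NormedAddCommGroup H₁] [InnerProductSpace ℝ H₁] [CompleteSpace H₁]
    [NormedAddCommGroup H₂] [InnerProductSpace ℝ H₂] [CompleteSpace H₂]
    (A B : H₁ →L[ℝ] H₂) (Ad Bd : H₂ →L[ℝ] H₁)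
    (hAclosed : IsClosed (Set.range A)) (hBclosed : IsClosed (Set.range B))
    -- Moore–Penrose equations for `Ad = A†`
    (h1 : A.comp (Ad.comp A) = A) (h2 : Ad.comp (A.comp Ad) = Ad)
    (h3 : ContinuousLinearMap.adjoint (A.comp Ad) = A.comp Ad)
    (h4 : ContinuousLinearMap.adjoint (Ad.comp A) = Ad.comp A)
    -- Moore–Penrose equations for `Bd = B†`
    (h1' : B.comp (Bd.comp B) = B) (h2' : Bd.comp (B.comp Bd) = Bd)
    (h3' : ContinuousLinearMap.adjoint (B.comp Bd) = B.comp Bd)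
    (h4' : ContinuousLinearMap.adjoint (Bd.comp B) = Bd.comp B) :
    ‖Bd - Ad‖ ≤ 3 * max ‖Bd‖ ‖Ad‖ ^ 2 * ‖B - A‖ :=
  pseudoinverse_perturbation_general A B Ad Bd h1 h2 h3 h4 h1' h2' h3' h4'
end

section
/- Let H₁, H₂ be Hilbert spaces, L : H₁ → H₂ bounded with dense range, and b ∈ H₁. For α > 0 let f_α = (L*L + α)⁻¹ b. Suppose there exists ψ ∈ H₂ with b = L*ψ. Then L f_α → ψ_proj as α → 0, where ψ_proj is the orthogonal projection of ψ onto the closure of the range of L; in particular if L has dense range then L f_α → ψ. -/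
/-!
Write `e = L f_α - ψ₁` with `ψ₁` the projection of `ψ` onto `closure (range L)`. Since
`L* ψ₁ = L* ψ`, the normal equation says `L* e = -α f_α`, and pairing with `e` gives the energy
identity `‖e‖² + α ‖f_α‖² = -⟪ψ₁, e⟫`. Testing it against an approximation `L w` of `ψ₁` yields
`‖e‖² ≤ ‖ψ₁‖ (‖ψ₁ - L w‖ + √α ‖w‖)`, which is small once `w` is chosen and then `α` is small.
-/

open Filter Topology

namespace ContinuousLinearMap

section Projection

variable {𝕜 E F : Type*} [RCLike 𝕜]
  [NormedAddCommGroup E] [InnerProductSpace 𝕜 E] [CompleteSpace E]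
  [NormedAddCommGroup F] [InnerProductSpace 𝕜 F] [CompleteSpace F]

theorem adjoint_starProjection_closure_range (L : E →L[𝕜] F) (y : F) :
    adjoint L ((LinearMap.range (L : E →ₗ[𝕜] F)).topologicalClosure.starProjection y) =
      adjoint L y := by
  have hperp : y - (LinearMap.range (L : E →ₗ[𝕜] F)).topologicalClosure.starProjection y ∈
      (LinearMap.range (L : E →ₗ[𝕜] F))ᗮ :=
    Submodule.orthogonal_le (Submodule.le_topologicalClosure _)
      (Submodule.sub_starProjection_mem_orthogonal y)
  rw [orthogonal_range, LinearMap.mem_ker, map_sub, sub_eq_zero] at hperp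
  exact hperp.symm

end Projection

variable {E F : Type*}
  [NormedAddCommGroup E] [InnerProductSpace ℝ E] [CompleteSpace E]
  [NormedAddCommGroup F] [InnerProductSpace ℝ F] [CompleteSpace F]

theorem norm_sub_sq_le_of_adjoint_comp_self_add_smul (L : E →L[ℝ] F) {y : F} {x : E} {α : ℝ}
    (hα : 0 ≤ α) (hx : adjoint L (L x) + α • x = adjoint L y) (w : E) :
    ‖L x - y‖ ^ 2 ≤ ‖y‖ * (‖y - L w‖ + √α * ‖w‖) := by
  set e := L x - y
  have hres : adjoint L e = -(α • x) := by
    rw [map_sub, ← hx]; abel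
  have henergy : ‖e‖ ^ 2 + α * ‖x‖ ^ 2 = -inner ℝ y e := by
    have hLx : inner ℝ (L x) e = -(α * ‖x‖ ^ 2) := by
      rw [← adjoint_inner_right, hres, inner_neg_right, real_inner_smul_right,
        real_inner_self_eq_norm_sq]
    rw [← real_inner_self_eq_norm_sq, show e = L x - y from rfl, inner_sub_left, hLx]
    ring
  have hcross : -inner ℝ y e ≤ ‖y‖ * ‖e‖ :=
    (neg_le_abs _).trans (abs_real_inner_le_norm y e)
  have he_le : ‖e‖ ≤ ‖y‖ := by
    have : ‖e‖ ^ 2 ≤ ‖y‖ * ‖e‖ := by nlinarith [sq_nonneg ‖x‖]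
    nlinarith [norm_nonneg e, norm_nonneg y]
  have hαx : α * ‖x‖ ≤ √α * ‖y‖ := by
    have hsq : (α * ‖x‖) ^ 2 ≤ (√α * ‖y‖) ^ 2 := by
      rw [mul_pow, mul_pow, Real.sq_sqrt hα]
      nlinarith [mul_le_mul_of_nonneg_left he_le (norm_nonneg y), sq_nonneg ‖e‖]
    exact le_of_pow_le_pow_left₀ two_ne_zero (by positivity) hsq
  have hsplit : -inner ℝ y e = -inner ℝ (y - L w) e + α * inner ℝ w x := by
    rw [inner_sub_left, ← adjoint_inner_right, hres, inner_neg_right, real_inner_smul_right]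
    ring
  calc ‖e‖ ^ 2 ≤ -inner ℝ y e := by nlinarith [sq_nonneg ‖x‖]
    _ = -inner ℝ (y - L w) e + α * inner ℝ w x := hsplit
    _ ≤ ‖y - L w‖ * ‖y‖ + ‖w‖ * (√α * ‖y‖) := by
      have hfirst : -inner ℝ (y - L w) e ≤ ‖y - L w‖ * ‖y‖ :=
        (neg_le_abs _).trans ((abs_real_inner_le_norm _ _).trans
          (mul_le_mul_of_nonneg_left he_le (norm_nonneg _)))
      have hsecond : α * inner ℝ w x ≤ ‖w‖ * (√α * ‖y‖) := by
        nlinarith [real_inner_le_norm w x, mul_le_mul_of_nonneg_left hαx (norm_nonneg w)]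
      linarith
    _ = ‖y‖ * (‖y - L w‖ + √α * ‖w‖) := by ring

theorem tendsto_of_adjoint_comp_self_add_smul (L : E →L[ℝ] F) {y : F}
    (hy : y ∈ (LinearMap.range (L : E →ₗ[ℝ] F)).topologicalClosure) {x : ℝ → E}
    (hx : ∀ α, 0 < α → adjoint L (L (x α)) + α • x α = adjoint L y) :
    Tendsto (fun α => L (x α)) (𝓝[>] 0) (𝓝 y) := by
  rw [Metric.tendsto_nhds]
  intro ε hε
  obtain ⟨_, ⟨w, rfl⟩, hw⟩ := Metric.mem_closure_iff.mp hy (ε ^ 2 / (‖y‖ + 1)) (by positivity)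
  rw [coe_coe, dist_eq_norm, lt_div_iff₀ (by positivity)] at hw
  set bound : ℝ → ℝ := fun α => ‖y‖ * (‖y - L w‖ + √α * ‖w‖)
  have hbound_zero : bound 0 < ε ^ 2 := by
    simp only [bound, Real.sqrt_zero, zero_mul, add_zero]
    nlinarith [norm_nonneg (y - L w)]
  have hbound_cont : ContinuousAt bound 0 := by fun_prop
  filter_upwards [self_mem_nhdsWithin,
    nhdsWithin_le_nhds (hbound_cont.eventually_lt continuousAt_const hbound_zero)]
    with α (hα : 0 < α) hαε
  rw [dist_eq_norm]
  exact lt_of_pow_lt_pow_left₀ 2 hε.le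
    ((norm_sub_sq_le_of_adjoint_comp_self_add_smul L hα.le (hx α hα) w).trans_lt hαε)

end ContinuousLinearMap

open ContinuousLinearMap

/-- Regularized normal equations converge to the projected target: if
`f_α = (L*L + α)⁻¹ b` with `b = L* ψ`, then `L f_α` converges as `α → 0⁺` to the
orthogonal projection of `ψ` onto the closure of the range of `L`; in particular, if
`L` has dense range then `L f_α → ψ`. -/
theorem regularized_normal_equation_convergence
    {H₁ H₂ : Type*}
    [NormedAddCommGroup H₁] [InnerProductSpace ℝ H₁] [CompleteSpace H₁]
    [NormedAddCommGroup H₂] [InnerProductSpace ℝ H₂] [CompleteSpace H₂]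
    (L : H₁ →L[ℝ] H₂) (b : H₁) (ψ : H₂)
    (hb : b = (ContinuousLinearMap.adjoint L) ψ)
    (f : ℝ → H₁)
    (hf : ∀ α : ℝ, 0 < α →
      (ContinuousLinearMap.adjoint L) (L (f α)) + α • f α = b) :
    Tendsto (fun α => L (f α)) (𝓝[>] (0:ℝ))
      (𝓝 ((Submodule.orthogonalProjection (LinearMap.range (L : H₁ →ₗ[ℝ] H₂)).topologicalClosure ψ : _) : H₂)) ∧
    (DenseRange L → Tendsto (fun α => L (f α)) (𝓝[>] (0:ℝ)) (𝓝 ψ)) := by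
  set K := (LinearMap.range (L : H₁ →ₗ[ℝ] H₂)).topologicalClosure
  have hconv : Tendsto (fun α => L (f α)) (𝓝[>] 0) (𝓝 (K.starProjection ψ)) :=
    tendsto_of_adjoint_comp_self_add_smul L (K.starProjection_apply_mem ψ) fun α hα => by
      rw [adjoint_starProjection_closure_range, ← hb]
      exact hf α hα
  refine ⟨hconv, fun hdense => ?_⟩
  have hψK : ψ ∈ K := by
    rw [← SetLike.mem_coe, Submodule.topologicalClosure_coe, LinearMap.coe_range, coe_coe]
    exact hdense ψ
  rwa [Submodule.starProjection_eq_self_iff.mpr hψK] at hconv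
end
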